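/- Let T > 0, ρ > 0, σP ≥ 0, θ_amb ∈ ℝ, θ_in ∈ ℝ with θ_in ≤ θ_amb, let ε : [0,T] → [0,∞) be continuous, and let θ_high ≥ θ_amb + σP/ρ. Let i : [0,T] → {0,1} and let θ : [0,T] → ℝ be continuous and satisfy θ'(t) = i(t)·σP − ρ(θ(t) − θ_amb) − ε(t)(θ(t) − θ_in) for all t ∈ [0,T] outside a finite set (where θ' denotes the derivative of θ). If θ(0) ∈ [θ_in, θ_high], then θ(t) ∈ [θ_in, θ_high] for all t ∈ [0,T]. -/

import Mathlib

/-!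
With `g = ρ + ε`, the equation gives `θ' ≤ -g (θ - θhigh)` (because `θhigh ≥ θamb + σP/ρ`)
and `θ' ≥ -g (θ - θin)` (because `θin ≤ θamb`). For such a barrier `c`, multiplying by the
integrating factor `exp (∫ g)` makes `(θ - c) exp (∫ g)` nonincreasing (resp. nondecreasing),
so `θ - c` keeps the sign it has at time `0`.
-/

open Set

theorem image_le_of_hasDerivAt_nonpos_off_finset {f f' : ℝ → ℝ} (E : Finset ℝ) {a b : ℝ}
    (hab : a ≤ b) (hf : ContinuousOn f (Icc a b))
    (hf' : ∀ t ∈ Ioo a b \ E, HasDerivAt f (f' t) t) (hle : ∀ t ∈ Ioo a b \ E, f' t ≤ 0) :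
    f b ≤ f a := by
  classical
  induction E using Finset.induction_on generalizing a b with
  | empty =>
    simp only [Finset.coe_empty, sdiff_empty] at hf' hle
    refine antitoneOn_of_hasDerivWithinAt_nonpos (convex_Icc a b) hf (f' := f') ?_ ?_
      (left_mem_Icc.2 hab) (right_mem_Icc.2 hab) hab
    · rw [interior_Icc]
      exact fun t ht => (hf' t ht).hasDerivWithinAt
    · rwa [interior_Icc]
  | @insert c E _ ih =>
    have hsub : ∀ {a' b'}, Ioo a' b' ⊆ Ioo a b → c ∉ Ioo a' b' →
        Ioo a' b' \ E ⊆ Ioo a b \ ↑(insert c E) := by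
      intro a' b' hI hc t ⟨ht, htE⟩
      refine ⟨hI ht, ?_⟩
      rw [Finset.coe_insert, mem_insert_iff]
      rintro (rfl | h)
      exacts [hc ht, htE h]
    by_cases hc : c ∈ Ioo a b
    · calc f b ≤ f c :=
            ih hc.2.le (hf.mono (Icc_subset_Icc_left hc.1.le))
              (fun t ht => hf' t (hsub (Ioo_subset_Ioo_left hc.1.le) (by simp) ht))
              (fun t ht => hle t (hsub (Ioo_subset_Ioo_left hc.1.le) (by simp) ht))
        _ ≤ f a :=
            ih hc.1.le (hf.mono (Icc_subset_Icc_right hc.2.le))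
              (fun t ht => hf' t (hsub (Ioo_subset_Ioo_right hc.2.le) (by simp) ht))
              (fun t ht => hle t (hsub (Ioo_subset_Ioo_right hc.2.le) (by simp) ht))
    · exact ih hab hf (fun t ht => hf' t (hsub subset_rfl hc ht))
        (fun t ht => hle t (hsub subset_rfl hc ht))

theorem exists_primitive_of_continuousOn_Icc {g : ℝ → ℝ} {a b : ℝ} (hab : a ≤ b)
    (hg : ContinuousOn g (Icc a b)) :
    ∃ G : ℝ → ℝ, ContinuousOn G (Icc a b) ∧ ∀ t ∈ Ioo a b, HasDerivAt G (g t) t := by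
  refine ⟨fun t => ∫ s in a..t, g s, ?_, fun t ht => ?_⟩
  · simpa [uIcc_of_le hab] using intervalIntegral.continuousOn_primitive_interval
      ((hg.integrableOn_Icc).mono_set (uIcc_of_le hab).subset)
  · exact intervalIntegral.integral_hasDerivAt_right
      (hg.mono (Icc_subset_Icc_right ht.2.le) |>.intervalIntegrable_of_Icc ht.1.le)
      ((hg.mono Ioo_subset_Icc_self).stronglyMeasurableAtFilter isOpen_Ioo t ht)
      (hg.continuousAt (Icc_mem_nhds ht.1 ht.2))

theorem le_of_hasDerivAt_le_neg_mul_sub {θ θ' g : ℝ → ℝ} (E : Finset ℝ) {a b c : ℝ}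
    (hab : a ≤ b) (hg : ContinuousOn g (Icc a b)) (hθ : ContinuousOn θ (Icc a b))
    (hθ' : ∀ t ∈ Ioo a b \ E, HasDerivAt θ (θ' t) t)
    (hle : ∀ t ∈ Ioo a b \ E, θ' t ≤ -g t * (θ t - c)) (ha : θ a ≤ c) :
    θ b ≤ c := by
  obtain ⟨G, hGc, hG'⟩ := exists_primitive_of_continuousOn_Icc hab hg
  have hmono : (θ b - c) * Real.exp (G b) ≤ (θ a - c) * Real.exp (G a) := by
    refine image_le_of_hasDerivAt_nonpos_off_finset (f := fun t => (θ t - c) * Real.exp (G t))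
      E hab ((hθ.sub continuousOn_const).mul hGc.rexp)
      (fun t ht => ((hθ' t ht).sub_const c).mul (hG' t ht.1).exp) fun t ht => ?_
    nlinarith [hle t ht, Real.exp_pos (G t)]
  have hend : (θ b - c) * Real.exp (G b) ≤ 0 :=
    hmono.trans (mul_nonpos_of_nonpos_of_nonneg (by linarith) (Real.exp_pos _).le)
  nlinarith [Real.exp_pos (G b)]

theorem le_of_neg_mul_sub_le_hasDerivAt {θ θ' g : ℝ → ℝ} (E : Finset ℝ) {a b c : ℝ}
    (hab : a ≤ b) (hg : ContinuousOn g (Icc a b)) (hθ : ContinuousOn θ (Icc a b))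
    (hθ' : ∀ t ∈ Ioo a b \ E, HasDerivAt θ (θ' t) t)
    (hle : ∀ t ∈ Ioo a b \ E, -g t * (θ t - c) ≤ θ' t) (ha : c ≤ θ a) :
    c ≤ θ b := by
  have hneg := le_of_hasDerivAt_le_neg_mul_sub (θ := -θ) (θ' := -θ') (c := -c) E hab hg hθ.neg
    (fun t ht => (hθ' t ht).neg) (fun t ht => by simp only [Pi.neg_apply]; linarith [hle t ht])
    (by simpa using ha)
  simpa using hneg

theorem temperature_interval_invariant_general
    (T ρ σP θamb θin θhigh : ℝ) (hρ : 0 < ρ) (hσP : 0 ≤ σP)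
    (hin : θin ≤ θamb) (hhigh : θamb + σP / ρ ≤ θhigh)
    (ε : ℝ → ℝ) (hεc : ContinuousOn ε (Set.Icc 0 T))
    (hεnn : ∀ t ∈ Set.Icc 0 T, 0 ≤ ε t)
    (i : ℝ → ℝ) (hi : ∀ t, i t = 0 ∨ i t = 1)
    (θ : ℝ → ℝ) (hθc : ContinuousOn θ (Set.Icc 0 T))
    (E : Finset ℝ)
    (hode : ∀ t ∈ Set.Icc 0 T, t ∉ E →
      HasDerivWithinAt θ (i t * σP - ρ * (θ t - θamb) - ε t * (θ t - θin)) (Set.Icc 0 T) t)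
    (h0 : θ 0 ∈ Set.Icc θin θhigh) :
    ∀ t ∈ Set.Icc 0 T, θ t ∈ Set.Icc θin θhigh := by
  have hσP_le : σP ≤ ρ * (θhigh - θamb) := by
    rw [mul_comm, ← div_le_iff₀ hρ]; linarith
  have hiσP : ∀ s, 0 ≤ i s * σP ∧ i s * σP ≤ σP := fun s => by
    rcases hi s with h | h <;> simp [h, hσP]
  intro t ht
  have hsub : Icc 0 t ⊆ Icc 0 T := Icc_subset_Icc_right ht.2
  have hg : ContinuousOn (fun s => ρ + ε s) (Icc 0 t) := (continuousOn_const.add hεc).mono hsub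
  have hθ' : ∀ s ∈ Ioo 0 t \ E,
      HasDerivAt θ (i s * σP - ρ * (θ s - θamb) - ε s * (θ s - θin)) s := fun s hs =>
    (hode s (hsub (Ioo_subset_Icc_self hs.1)) hs.2).hasDerivAt
      (Icc_mem_nhds hs.1.1 (hs.1.2.trans_le ht.2))
  constructor
  · refine le_of_neg_mul_sub_le_hasDerivAt E ht.1 hg (hθc.mono hsub) hθ' (fun s hs => ?_) h0.1
    nlinarith [(hiσP s).1]
  · refine le_of_hasDerivAt_le_neg_mul_sub E ht.1 hg (hθc.mono hsub) hθ' (fun s hs => ?_) h0.2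
    have hdrain : 0 ≤ ε s * (θhigh - θin) :=
      mul_nonneg (hεnn s (hsub (Ioo_subset_Icc_self hs.1))) (by linarith [h0.1, h0.2])
    nlinarith [(hiσP s).2]

/-- Invariance of the temperature interval `[θ_in, θ_high]` for the water
heater ODE `θ' = i·σP − ρ(θ − θ_amb) − ε(t)(θ − θ_in)`, where the mode `i` takes values in
`{0,1}`, the drain rate `ε` is continuous and nonnegative, `θ_in ≤ θ_amb`, and
`θ_high ≥ θ_amb + σP/ρ`, and the ODE holds outside a finite set of times. -/
theorem temperature_interval_invariant
    (T ρ σP θamb θin θhigh : ℝ) (hT : 0 < T) (hρ : 0 < ρ) (hσP : 0 ≤ σP)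
    (hin : θin ≤ θamb) (hhigh : θamb + σP / ρ ≤ θhigh)
    (ε : ℝ → ℝ) (hεc : ContinuousOn ε (Set.Icc 0 T))
    (hεnn : ∀ t ∈ Set.Icc 0 T, 0 ≤ ε t)
    (i : ℝ → ℝ) (hi : ∀ t, i t = 0 ∨ i t = 1)
    (θ : ℝ → ℝ) (hθc : ContinuousOn θ (Set.Icc 0 T))
    (E : Finset ℝ)
    (hode : ∀ t ∈ Set.Icc 0 T, t ∉ E →
      HasDerivWithinAt θ (i t * σP - ρ * (θ t - θamb) - ε t * (θ t - θin)) (Set.Icc 0 T) t)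
    (h0 : θ 0 ∈ Set.Icc θin θhigh) :
    ∀ t ∈ Set.Icc 0 T, θ t ∈ Set.Icc θin θhigh :=
  temperature_interval_invariant_general T ρ σP θamb θin θhigh hρ hσP hin hhigh ε hεc hεnn i hi θ
    hθc E hode h0
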